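/- arXiv:math/0212314 — 5 statements merged into one kernel-verified Lean document; each statement's English description precedes it below -/
import Mathlib

section
/- The function z ↦ log|z + i| · Im(z) / |z|^4 is not Lebesgue integrable on ℂ with respect to the standard area (Lebesgue) measure; that is, the integral of its absolute value over ℂ is infinite. -/
/-!
Near `0` we have `log ‖z + i‖ ≈ Im z`, so on the cone `Im z ≳ ‖z‖` the integrand is of size
`‖z‖⁻²`, which is not integrable in two real dimensions. Concretely, on the ball of radius `r`
centred at `2ri` the integrand is at least `1 / (162 r²)` while the ball has area `π r²`; the
balls with `r = 3⁻ⁿ`, `n ≥ 1`, are pairwise disjoint, so each contributes at least `π / 162`.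
-/

open Complex MeasureTheory Metric ENNReal

theorem MeasureTheory.lintegral_eq_top_of_pairwise_disjoint {α ι : Type*} [MeasurableSpace α]
    [Countable ι] [Infinite ι] {μ : Measure α} {f : α → ℝ≥0∞} {s : ι → Set α}
    (hs : ∀ i, MeasurableSet (s i)) (hd : Pairwise (Function.onFun Disjoint s)) {c : ℝ≥0∞}
    (hc : c ≠ 0) (h : ∀ i, c ≤ ∫⁻ x in s i, f x ∂μ) :
    ∫⁻ x, f x ∂μ = ⊤ := by
  refine top_le_iff.mp ?_
  calc ⊤ = ∑' _ : ι, c := (ENNReal.tsum_const_eq_top_of_ne_zero hc).symm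
    _ ≤ ∑' i, ∫⁻ x in s i, f x ∂μ := ENNReal.tsum_le_tsum h
    _ = ∫⁻ x in ⋃ i, s i, f x ∂μ := (lintegral_iUnion hs hd f).symm
    _ ≤ ∫⁻ x, f x ∂μ := setLIntegral_le_lintegral _ f

namespace Complex

theorem im_div_two_le_log_norm_add_I {z : ℂ} (h0 : 0 ≤ z.im) (h1 : z.im ≤ 1) :
    z.im / 2 ≤ Real.log ‖z + I‖ := by
  have hnorm : 1 + z.im ≤ ‖z + I‖ := by
    simpa [abs_of_nonneg (by linarith : 0 ≤ z.im + 1), add_comm] using abs_im_le_norm (z + I)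
  calc z.im / 2 ≤ 2 * z.im / (z.im + 2) := by
        rw [le_div_iff₀ (by linarith)]; nlinarith
    _ ≤ Real.log (1 + z.im) := Real.le_log_one_add_of_nonneg h0
    _ ≤ Real.log ‖z + I‖ := Real.log_le_log (by linarith) hnorm

theorem lt_im_and_norm_lt_of_mem_ball {r : ℝ} {z : ℂ} (hz : z ∈ ball ((2 * r : ℝ) * I) r) :
    r < z.im ∧ ‖z‖ < 3 * r := by
  rw [mem_ball, dist_eq] at hz
  have him : |z.im - 2 * r| < r := by
    simpa using (abs_im_le_norm _).trans_lt hz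
  have hcentre : ‖((2 * r : ℝ) : ℂ) * I‖ = 2 * r := by
    simpa using abs_of_pos (by linarith [(abs_nonneg _).trans_lt him] : 0 < 2 * r)
  refine ⟨by linarith [(abs_lt.mp him).1], ?_⟩
  calc ‖z‖ ≤ ‖z - ((2 * r : ℝ) : ℂ) * I‖ + ‖((2 * r : ℝ) : ℂ) * I‖ := norm_le_norm_sub_add _ _
    _ < 3 * r := by linarith

theorem le_log_norm_add_I_mul_im_div_of_mem_ball {r : ℝ} (hr : r ≤ 3⁻¹) {z : ℂ}
    (hz : z ∈ ball ((2 * r : ℝ) * I) r) :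
    1 / (162 * r ^ 2) ≤ Real.log ‖z + I‖ * z.im / ‖z‖ ^ 4 := by
  obtain ⟨him, hnorm⟩ := lt_im_and_norm_lt_of_mem_ball hz
  have hr0 : 0 < r := dist_nonneg.trans_lt (mem_ball.mp hz)
  have hz0 : 0 < ‖z‖ := hr0.trans (him.trans_le (im_le_norm z))
  have hlog := im_div_two_le_log_norm_add_I (by linarith) (by linarith [im_le_norm z])
  rw [div_le_div_iff₀ (by positivity) (by positivity)]
  calc 1 * ‖z‖ ^ 4 ≤ (3 * r) ^ 4 := by rw [one_mul]; gcongr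
    _ = r / 2 * r * (162 * r ^ 2) := by ring
    _ ≤ Real.log ‖z + I‖ * z.im * (162 * r ^ 2) := by
        gcongr
        · linarith
        · linarith

theorem ofReal_pi_div_le_setLIntegral_ball {r : ℝ} (hr0 : 0 < r) (hr : r ≤ 3⁻¹) :
    ENNReal.ofReal (Real.pi / 162) ≤ ∫⁻ z in ball ((2 * r : ℝ) * I) r,
      ENNReal.ofReal |Real.log ‖z + I‖ * z.im / ‖z‖ ^ 4| := by
  calc ENNReal.ofReal (Real.pi / 162)
      = ENNReal.ofReal (1 / (162 * r ^ 2)) * volume (ball ((2 * r : ℝ) * I) r) := by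
        rw [volume_ball, ← ofReal_coe_nnreal, NNReal.coe_real_pi,
          ← ENNReal.ofReal_pow hr0.le, ← ENNReal.ofReal_mul (by positivity),
          ← ENNReal.ofReal_mul (by positivity)]
        congr 1
        field_simp
    _ ≤ _ := by
        refine (mul_le_mul_left ?_ _).trans (iInf_mul_le_setLIntegral _ measurableSet_ball)
        refine le_iInf₂ fun z hz => ofReal_le_ofReal ?_
        exact (le_log_norm_add_I_mul_im_div_of_mem_ball hr hz).trans (le_abs_self _)

theorem pairwise_disjoint_ball_two_mul_inv_three_pow_mul_I :
    Pairwise (Function.onFun Disjoint fun n : ℕ =>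
      ball ((2 * 3⁻¹ ^ (n + 1) : ℝ) * I) (3⁻¹ ^ (n + 1))) := by
  refine (pairwise_disjoint_on _).mpr fun m n hmn => Set.disjoint_left.mpr fun z hm hn => ?_
  have hpow : 3 * (3⁻¹ : ℝ) ^ (n + 1) ≤ 3⁻¹ ^ (m + 1) := by
    obtain ⟨k, rfl⟩ := Nat.exists_eq_add_of_lt hmn
    have : (3⁻¹ : ℝ) ^ k ≤ 1 := pow_le_one₀ (by norm_num) (by norm_num)
    calc 3 * (3⁻¹ : ℝ) ^ (m + k + 1 + 1) = 3⁻¹ ^ (m + 1) * 3⁻¹ ^ k := by ring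
      _ ≤ 3⁻¹ ^ (m + 1) := mul_le_of_le_one_right (by positivity) this
  linarith [(lt_im_and_norm_lt_of_mem_ball hm).1, (lt_im_and_norm_lt_of_mem_ball hn).2,
    im_le_norm z]

end Complex

/-- The function `z ↦ log|z + i| · Im z / |z|⁴` is not Lebesgue integrable on `ℂ`:
the integral of its absolute value over `ℂ` is infinite. -/
theorem not_integrable_log_abs_add_I_mul_im :
    ¬ Integrable (fun z : ℂ =>
        Real.log (‖z + Complex.I‖) * z.im / ‖z‖ ^ 4) volume ∧
    ∫⁻ z : ℂ, ENNReal.ofReal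
        |Real.log (‖z + Complex.I‖) * z.im / ‖z‖ ^ 4| = ⊤ := by
  have htop : ∫⁻ z : ℂ, ENNReal.ofReal |Real.log ‖z + I‖ * z.im / ‖z‖ ^ 4| = ⊤ :=
    lintegral_eq_top_of_pairwise_disjoint (fun _ => measurableSet_ball)
      pairwise_disjoint_ball_two_mul_inv_three_pow_mul_I (by positivity) fun n =>
      ofReal_pi_div_le_setLIntegral_ball (by positivity)
        (pow_le_of_le_one (by norm_num) (by norm_num) n.succ_ne_zero)
  refine ⟨fun hf => ?_, htop⟩
  exact ((hasFiniteIntegral_iff_norm _).mp hf.hasFiniteIntegral).ne htop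
end

section
/- For every real number r, the integral over t from 0 to 2π of log|r·exp(i t) + i| · cos(t) dt equals 0. -/
/-!
The reflection `t ↦ π - t` sends `r e^{it}` to `-conj (r e^{it})`, hence fixes `|r e^{it} + i|`,
while it negates `cos t`. So the `2π`-periodic integrand is odd about `π/2`, and its integral over
a period vanishes.
-/

open Complex Real ComplexConjugate

theorem Function.Periodic.intervalIntegral_eq_zero_of_sub_eq_neg {E : Type*}
    [NormedAddCommGroup E] [NormedSpace ℝ E] {f : ℝ → E} {T : ℝ} (hf : Periodic f T)
    {c : ℝ} (hc : ∀ t, f (c - t) = -f t) (a : ℝ) :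
    ∫ t in a..a + T, f t = 0 := by
  have : IsAddTorsionFree E := .of_isTorsionFree ℝ E
  refine self_eq_neg.mp ?_
  calc ∫ t in a..a + T, f t = ∫ t in c - (a + T)..c - (a + T) + T, f t :=
        hf.intervalIntegral_add_eq _ _
    _ = ∫ t in a..a + T, f (c - t) := by
        rw [intervalIntegral.integral_comp_sub_left]
        congr 1; ring
    _ = -∫ t in a..a + T, f t := by simp only [hc, intervalIntegral.integral_neg]

theorem Complex.periodic_exp_I_mul : Function.Periodic (fun t : ℝ => exp (I * t)) (2 * π) :=
  fun t => by
    simpa only [mul_comm I, ofReal_add, ofReal_mul, ofReal_ofNat] using exp_mul_I_periodic t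

theorem Complex.exp_I_mul_pi_sub (t : ℝ) : exp (I * ↑(π - t)) = -conj (exp (I * t)) := by
  rw [ofReal_sub, mul_sub, sub_eq_add_neg, exp_add, mul_comm I, exp_pi_mul_I, ← exp_conj, map_mul,
    conj_I, conj_ofReal, neg_mul, neg_mul, one_mul]

theorem Complex.norm_neg_conj_add_I (z : ℂ) : ‖-conj z + I‖ = ‖z + I‖ := by
  rw [← norm_conj, map_add, map_neg, conj_conj, conj_I, ← neg_add, norm_neg]

/-- For every real `r`, `∫ t in 0..2π, log|r·exp(i t) + i| · cos t dt = 0`. -/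
theorem circle_average_log_abs_add_I_mul_cos (r : ℝ) :
    (∫ t in (0 : ℝ)..(2 * Real.pi),
        Real.log (‖(r : ℂ) * Complex.exp (Complex.I * (t : ℂ)) + Complex.I‖)
          * Real.cos t) = 0 := by
  have hper : Function.Periodic
      (fun t : ℝ => Real.log ‖(r : ℂ) * exp (I * t) + I‖ * Real.cos t) (2 * π) :=
    (periodic_exp_I_mul.comp fun w => Real.log ‖(r : ℂ) * w + I‖).mul Real.cos_periodic
  have hanti (t : ℝ) : Real.log ‖(r : ℂ) * exp (I * ↑(π - t)) + I‖ * Real.cos (π - t)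
      = -(Real.log ‖(r : ℂ) * exp (I * t) + I‖ * Real.cos t) := by
    rw [exp_I_mul_pi_sub, mul_neg, ← conj_ofReal r, ← map_mul, norm_neg_conj_add_I, conj_ofReal,
      Real.cos_pi_sub, mul_neg]
  simpa only [zero_add] using hper.intervalIntegral_eq_zero_of_sub_eq_neg hanti 0
end

section
/- For every real number r > 0, the integral over t from 0 to 2π of log|r·exp(i t) + i| · sin(t) dt is strictly positive. -/
/-!
Write `z = r e^{it}`. The substitution `t ↦ 2π - t` replaces `z` by `conj z` and `sin t` by
`-sin t`, so folding `[0, 2π]` onto `[0, π]` turns the integral into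
`∫ t in 0..π, sin t * (log |z + i| - log |z - i|)`. For `t ∈ (0, π)` we have `Im z > 0`, hence
`|z + i| > |z - i|` and the integrand is positive. Integrability, in spite of the logarithmic
singularity at `z = -i` when `r = 1`, holds because `t ↦ r e^{it} + i` is real analytic.
-/

open Complex Real

open MeasureTheory ComplexConjugate

theorem Complex.norm_sub_I_lt_norm_add_I {z : ℂ} (hz : 0 < z.im) : ‖z - I‖ < ‖z + I‖ := by
  have hsq : ‖z + I‖ ^ 2 = ‖z - I‖ ^ 2 + 4 * z.im := by
    simp only [Complex.sq_norm, normSq_apply, add_re, sub_re, add_im, sub_im, I_re, I_im]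
    ring
  exact lt_of_pow_lt_pow_left₀ 2 (norm_nonneg _) (by linarith)

theorem Complex.log_norm_sub_I_lt_log_norm_add_I {z : ℂ} (hz : 0 < z.im) :
    Real.log ‖z - I‖ < Real.log ‖z + I‖ := by
  rcases eq_or_ne z I with rfl | hzI
  · simpa using Real.log_pos (by norm_num [← two_mul] : (1 : ℝ) < ‖I + I‖)
  · exact Real.log_lt_log (norm_pos_iff.2 (sub_ne_zero.2 hzI)) (norm_sub_I_lt_norm_add_I hz)

theorem intervalIntegral.integral_zero_two_mul_eq_integral_add_reflect {E : Type*}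
    [NormedAddCommGroup E] [NormedSpace ℝ E] {f : ℝ → E} {a : ℝ}
    (hf : IntervalIntegrable f volume 0 (2 * a)) :
    ∫ t in 0..2 * a, f t = ∫ t in 0..a, (f t + f (2 * a - t)) := by
  have ha : a ∈ Set.uIcc 0 (2 * a) := by
    rw [Set.mem_uIcc]; rcases le_total 0 a with h | h <;> [left; right] <;> constructor <;> linarith
  have h₁ : IntervalIntegrable f volume 0 a := hf.mono_set (Set.uIcc_subset_uIcc_left ha)
  have h₂ : IntervalIntegrable f volume a (2 * a) := hf.mono_set (Set.uIcc_subset_uIcc_right ha)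
  have h₂' : IntervalIntegrable (fun t => f (2 * a - t)) volume 0 a := by
    simpa [two_mul] using (h₂.comp_sub_left (2 * a)).symm
  rw [integral_add h₁ h₂', ← integral_add_adjacent_intervals h₁ h₂, integral_comp_sub_left]
  congr 2 <;> ring

theorem intervalIntegrable_log_norm_ofReal_mul_exp_I_mul_add_I (r a b : ℝ) :
    IntervalIntegrable (fun t : ℝ => Real.log ‖(r : ℂ) * exp (I * t) + I‖) volume a b := by
  have h := ((analyticOnNhd_circleMap I r).mono (Set.subset_univ _)).meromorphicOn
    |>.intervalIntegrable_log_norm (a := a) (b := b)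
  simpa [circleMap, add_comm, mul_comm I] using h

theorem norm_ofReal_mul_exp_I_mul_two_pi_sub_add_I (r t : ℝ) :
    ‖(r : ℂ) * exp (I * ↑(2 * π - t)) + I‖ = ‖(r : ℂ) * exp (I * t) - I‖ := by
  have h : (r : ℂ) * exp (I * ↑(2 * π - t)) + I = conj ((r : ℂ) * exp (I * t) - I) := by
    rw [map_sub, map_mul, conj_ofReal, ← exp_conj, conj_I, map_mul, conj_I, conj_ofReal]
    push_cast
    rw [mul_sub, Complex.exp_sub, mul_comm I (2 * π : ℂ), exp_two_pi_mul_I, one_div,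
      ← Complex.exp_neg, neg_mul, sub_neg_eq_add]
  rw [h, norm_conj]

theorem log_norm_mul_sin_add_reflect_pos {r t : ℝ} (hr : 0 < r) (ht : t ∈ Set.Ioo 0 π) :
    0 < Real.log ‖(r : ℂ) * exp (I * t) + I‖ * Real.sin t
      + Real.log ‖(r : ℂ) * exp (I * ↑(2 * π - t)) + I‖ * Real.sin (2 * π - t) := by
  set z : ℂ := r * exp (I * t)
  have hsin : 0 < Real.sin t := Real.sin_pos_of_pos_of_lt_pi ht.1 ht.2
  have hz : 0 < z.im := by
    rw [im_ofReal_mul, mul_comm I, exp_ofReal_mul_I_im]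
    positivity
  rw [norm_ofReal_mul_exp_I_mul_two_pi_sub_add_I, Real.sin_two_pi_sub]
  linarith [mul_pos hsin (sub_pos.2 (log_norm_sub_I_lt_log_norm_add_I hz))]

/-- For every real `r > 0`, `∫ t in 0..2π, log|r·exp(i t) + i| · sin t dt > 0`. -/
theorem circle_average_log_abs_add_I_mul_sin_pos (r : ℝ) (hr : 0 < r) :
    0 < ∫ t in (0 : ℝ)..(2 * Real.pi),
        Real.log ‖(r : ℂ) * Complex.exp (Complex.I * (t : ℂ)) + Complex.I‖
          * Real.sin t := by
  have hf (a b : ℝ) : IntervalIntegrable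
      (fun t : ℝ => Real.log ‖(r : ℂ) * exp (I * t) + I‖ * Real.sin t) volume a b :=
    (intervalIntegrable_log_norm_ofReal_mul_exp_I_mul_add_I r a b).mul_continuousOn
      Real.continuous_sin.continuousOn
  rw [intervalIntegral.integral_zero_two_mul_eq_integral_add_reflect (hf _ _)]
  refine intervalIntegral.intervalIntegral_pos_of_pos_on ?_
    (fun t ht => log_norm_mul_sin_add_reflect_pos hr ht) pi_pos
  exact (hf 0 π).add (by simpa [two_mul] using ((hf π (2 * π)).comp_sub_left (2 * π)).symm)
end

section
/- The function z ↦ log(|z + 1| / |z − 1|) · Re(z) / |z|^4 is nonnegative on the right half-plane {z ∈ ℂ : Re(z) > 0}, and its Lebesgue integral over that half-plane with respect to the standard area (Lebesgue) measure on ℂ is +∞. -/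
/-!
Since `‖z + 1‖² - ‖z - 1‖² = 4 Re z`, the logarithm is at least `Re z / 2` near the origin, so on
the sector `|z| < 1/2`, `|arg z| < 1` the integrand is at least `1 / (8 |z|²)`. In polar
coordinates the area element `r dr dθ` turns this into a multiple of `∫₀ dr / r = ∞`.
-/

open Complex MeasureTheory Set

lemma Complex.norm_add_one_sq_sub_norm_sub_one_sq (z : ℂ) :
    ‖z + 1‖ ^ 2 - ‖z - 1‖ ^ 2 = 4 * z.re := by
  simp only [Complex.sq_norm, normSq_apply, add_re, add_im, sub_re, sub_im, one_re, one_im]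
  ring

lemma Complex.norm_sub_one_le_norm_add_one {z : ℂ} (hz : 0 ≤ z.re) : ‖z - 1‖ ≤ ‖z + 1‖ := by
  refine (pow_le_pow_iff_left₀ (norm_nonneg _) (norm_nonneg _) two_ne_zero).mp ?_
  linarith [norm_add_one_sq_sub_norm_sub_one_sq z]

lemma Real.sq_sub_sq_div_le_log_div {a b : ℝ} (ha : 0 < a) (hb : 0 < b) :
    (a ^ 2 - b ^ 2) / (2 * a ^ 2) ≤ Real.log (a / b) := by
  have h := Real.one_sub_inv_le_log_of_pos (pow_pos (div_pos ha hb) 2)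
  rw [Real.log_pow, div_pow, inv_div] at h
  have : (a ^ 2 - b ^ 2) / (2 * a ^ 2) = (1 - b ^ 2 / a ^ 2) / 2 := by field_simp
  rw [this]
  push_cast at h
  linarith

noncomputable def logRatioKernel (z : ℂ) : ℝ :=
  Real.log (‖z + 1‖ / ‖z - 1‖) * z.re / ‖z‖ ^ 4

lemma logRatioKernel_nonneg {z : ℂ} (hz : 0 ≤ z.re) : 0 ≤ logRatioKernel z := by
  refine div_nonneg (mul_nonneg ?_ hz) (by positivity)
  rcases (norm_nonneg (z - 1)).eq_or_lt with h | h
  · simp [← h]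
  · exact Real.log_nonneg ((one_le_div h).mpr (norm_sub_one_le_norm_add_one hz))

lemma one_div_eight_mul_sq_le_logRatioKernel {z : ℂ} (hz : ‖z‖ ≤ 1 / 2)
    (hre : ‖z‖ ≤ 2 * z.re) (hz0 : z ≠ 0) : 1 / (8 * ‖z‖ ^ 2) ≤ logRatioKernel z := by
  have hnorm : 0 < ‖z‖ := norm_pos_iff.mpr hz0
  have hre0 : 0 < z.re := by linarith
  have hsub : 0 < ‖z - 1‖ := by
    have := norm_sub_norm_le 1 z
    rw [norm_one, norm_sub_rev] at this
    linarith
  have hadd : ‖z + 1‖ ≤ 3 / 2 := (norm_add_le z 1).trans (by rw [norm_one]; linarith)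
  have hadd0 : 0 < ‖z + 1‖ := hsub.trans_le (norm_sub_one_le_norm_add_one hre0.le)
  have hlog : z.re / 2 ≤ Real.log (‖z + 1‖ / ‖z - 1‖) := by
    refine le_trans ?_ (Real.sq_sub_sq_div_le_log_div hadd0 hsub)
    have hsq : ‖z + 1‖ ^ 2 ≤ 4 := by nlinarith
    rw [norm_add_one_sq_sub_norm_sub_one_sq, le_div_iff₀ (by positivity)]
    nlinarith
  calc 1 / (8 * ‖z‖ ^ 2) = (‖z‖ / 2) / 2 * (‖z‖ / 2) / ‖z‖ ^ 4 := by field_simp; ring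
    _ ≤ z.re / 2 * z.re / ‖z‖ ^ 4 := by gcongr <;> linarith
    _ ≤ logRatioKernel z := by unfold logRatioKernel; gcongr

lemma lintegral_Ioo_zero_ofReal_div_eq_top {a c : ℝ} (ha : 0 < a) (hc : 0 < c) :
    ∫⁻ x in Ioo 0 a, ENNReal.ofReal (c / x) = ⊤ := by
  by_contra h
  have hint : IntegrableOn (fun x => c / x) (Ioo 0 a) :=
    (lintegral_ofReal_ne_top_iff_integrable (by fun_prop)
      ((ae_restrict_iff' measurableSet_Ioo).mpr
        (Filter.Eventually.of_forall fun x hx => (div_pos hc hx.1).le))).mp h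
  have hinv : IntegrableOn (fun x : ℝ => x⁻¹) (Ioo 0 a) := by
    refine IntegrableOn.congr_fun (hint.const_mul c⁻¹) (fun x _ => ?_) measurableSet_Ioo
    field_simp
  rw [← intervalIntegrable_iff_integrableOn_Ioo_of_le ha.le, intervalIntegrable_inv_iff] at hinv
  simp [ha.ne, left_mem_uIcc] at hinv

lemma ofReal_div_le_smul_indicator_logRatioKernel_polarCoord_symm {r θ : ℝ}
    (hr : r ∈ Ioo 0 (1 / 2)) (hθ : θ ∈ Ioo (-1) 1) :
    ENNReal.ofReal (1 / 8 / r) ≤ ENNReal.ofReal r •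
      {z : ℂ | 0 < z.re}.indicator (fun z => ENNReal.ofReal (logRatioKernel z))
        (Complex.polarCoord.symm (r, θ)) := by
  set z := Complex.polarCoord.symm (r, θ)
  have hnorm : ‖z‖ = r := by rw [norm_polarCoord_symm, abs_of_pos hr.1]
  have hre : z.re = r * Real.cos θ := by simp [z, cos_ofReal_re]
  have hcos : 1 / 2 ≤ Real.cos θ := by
    nlinarith [Real.one_sub_sq_div_two_le_cos (x := θ), hθ.1, hθ.2]
  have hz : ‖z‖ ≤ 2 * z.re := by rw [hnorm, hre]; nlinarith [hr.1]
  have hz0 : z ≠ 0 := by rw [← norm_pos_iff, hnorm]; exact hr.1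
  have hbound := one_div_eight_mul_sq_le_logRatioKernel (hnorm ▸ hr.2.le) hz hz0
  rw [hnorm] at hbound
  rw [indicator_of_mem (s := {z : ℂ | 0 < z.re}) (show 0 < z.re by linarith [hr.1]),
    smul_eq_mul, ← ENNReal.ofReal_mul hr.1.le]
  refine ENNReal.ofReal_le_ofReal ?_
  calc 1 / 8 / r = r * (1 / (8 * r ^ 2)) := by field_simp
    _ ≤ r * logRatioKernel z := by gcongr; exact hr.1.le

theorem lintegral_ofReal_logRatioKernel_eq_top :
    ∫⁻ z in {z : ℂ | 0 < z.re}, ENNReal.ofReal (logRatioKernel z) = ⊤ := by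
  set S : Set (ℝ × ℝ) := Ioo 0 (1 / 2) ×ˢ Ioo (-1) 1
  have hS : S ⊆ polarCoord.target := by
    rw [polarCoord_target]
    exact prod_mono Ioo_subset_Ioi_self
      (Ioo_subset_Ioo (by linarith [Real.pi_gt_three]) (by linarith [Real.pi_gt_three]))
  have hpolar : ∫⁻ p in S, ENNReal.ofReal (1 / 8 / p.1) = ⊤ := by
    rw [Measure.volume_eq_prod, setLIntegral_prod _ (by fun_prop)]
    simp only [setLIntegral_const, Real.volume_Ioo]
    rw [lintegral_mul_const' _ _ ENNReal.ofReal_ne_top,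
      lintegral_Ioo_zero_ofReal_div_eq_top (by norm_num) (by norm_num)]
    exact ENNReal.top_mul (by norm_num)
  have hH : MeasurableSet {z : ℂ | 0 < z.re} := measurableSet_lt measurable_const measurable_re
  rw [eq_top_iff, ← hpolar]
  calc ∫⁻ p in S, ENNReal.ofReal (1 / 8 / p.1)
      ≤ ∫⁻ p in S, ENNReal.ofReal p.1 •
          {z : ℂ | 0 < z.re}.indicator (fun z => ENNReal.ofReal (logRatioKernel z))
            (Complex.polarCoord.symm p) :=
        setLIntegral_mono' (measurableSet_Ioo.prod measurableSet_Ioo) fun _ hp =>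
          ofReal_div_le_smul_indicator_logRatioKernel_polarCoord_symm hp.1 hp.2
    _ ≤ ∫⁻ p in polarCoord.target, ENNReal.ofReal p.1 •
          {z : ℂ | 0 < z.re}.indicator (fun z => ENNReal.ofReal (logRatioKernel z))
            (Complex.polarCoord.symm p) := lintegral_mono_set hS
    _ = ∫⁻ z in {z : ℂ | 0 < z.re}, ENNReal.ofReal (logRatioKernel z) := by
        rw [Complex.lintegral_comp_polarCoord_symm, lintegral_indicator hH]

/-- The function `z ↦ log(|z + 1| / |z − 1|) · Re z / |z|⁴` is nonnegative on the right
half-plane `{z : Re z > 0}`, and its Lebesgue integral over that half-plane with respect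
to the standard area measure on `ℂ` is `+∞`. -/
theorem lintegral_right_half_plane_eq_top :
    (∀ z : ℂ, 0 < z.re →
      0 ≤ Real.log (‖z + 1‖ / ‖z - 1‖) * z.re / ‖z‖ ^ 4) ∧
    ∫⁻ z in {z : ℂ | 0 < z.re},
        ENNReal.ofReal
          (Real.log (‖z + 1‖ / ‖z - 1‖) * z.re / ‖z‖ ^ 4)
      = ⊤ :=
  ⟨fun _ hz => logRatioKernel_nonneg hz.le, lintegral_ofReal_logRatioKernel_eq_top⟩
end

section
/- The function z ↦ log|z + 1| · Re(z) / |z|^4 is not Lebesgue integrable on ℂ with respect to the standard area (Lebesgue) measure; that is, the integral of its absolute value over ℂ is infinite. -/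
/-!
Near `0` we have `log ‖z + 1‖ ≈ Re z`, so the integrand behaves like `(Re z)² / ‖z‖⁴`. On the
sector `0 < Re z < 1`, `|Im z| < Re z` it is at least `1 / (8 (Re z)²)`; integrating over the
vertical slice of length `2 Re z` leaves `1 / (4 Re z)`, which is not integrable at `0`.
-/

open Complex MeasureTheory Set

lemma Real.lintegral_Ioo_zero_ofReal_inv_eq_top {a : ℝ} (ha : 0 < a) :
    ∫⁻ x in Ioo 0 a, ENNReal.ofReal x⁻¹ = ⊤ := by
  by_contra h
  have hint : IntegrableOn (fun x : ℝ ↦ x ^ (-1 : ℝ)) (Ioo 0 a) := by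
    simp only [Real.rpow_neg_one]
    refine (lintegral_ofReal_ne_top_iff_integrable measurable_inv.aestronglyMeasurable ?_).1 h
    filter_upwards [ae_restrict_mem measurableSet_Ioo] with x hx
    exact inv_nonneg.2 hx.1.le
  exact lt_irrefl _ ((intervalIntegral.integrableOn_Ioo_rpow_iff ha).1 hint)

lemma Real.half_le_log_one_add {x : ℝ} (h0 : 0 ≤ x) (h2 : x ≤ 2) : x / 2 ≤ Real.log (1 + x) := by
  refine le_trans ?_ (Real.le_log_one_add_of_nonneg h0)
  rw [div_le_div_iff₀ two_pos (by linarith)]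
  nlinarith

lemma Complex.lintegral_eq_lintegral_lintegral {f : ℂ → ENNReal} (hf : Measurable f) :
    ∫⁻ z, f z = ∫⁻ x : ℝ, ∫⁻ y : ℝ, f ⟨x, y⟩ := by
  rw [← volume_preserving_equiv_real_prod.symm.lintegral_comp hf, Measure.volume_eq_prod]
  exact lintegral_prod (f ∘ measurableEquivRealProd.symm)
    (hf.comp measurableEquivRealProd.symm.measurable).aemeasurable

lemma Complex.sq_norm_le_two_mul_re_sq {z : ℂ} (h : |z.im| ≤ |z.re|) :
    ‖z‖ ^ 2 ≤ 2 * z.re ^ 2 := by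
  rw [Complex.sq_norm, normSq_apply, ← abs_mul_abs_self z.re, ← abs_mul_abs_self z.im]
  nlinarith [abs_nonneg z.im, sq_abs z.re]

lemma Complex.inv_eight_mul_re_sq_le_log_norm_add_one_mul_re_div {z : ℂ} (h0 : 0 < z.re)
    (h2 : z.re ≤ 2) (him : |z.im| ≤ z.re) :
    (8 * z.re ^ 2)⁻¹ ≤ Real.log ‖z + 1‖ * z.re / ‖z‖ ^ 4 := by
  have hlog : z.re / 2 ≤ Real.log ‖z + 1‖ := by
    refine (Real.half_le_log_one_add h0.le h2).trans (Real.log_le_log (by linarith) ?_)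
    simpa [add_comm] using re_le_norm (z + 1)
  have hnorm : ‖z‖ ^ 4 ≤ 4 * z.re ^ 4 := by
    have := Complex.sq_norm_le_two_mul_re_sq (him.trans (le_abs_self _))
    nlinarith [sq_nonneg ‖z‖]
  have hz : 0 < ‖z‖ := norm_pos_iff.2 fun h ↦ by simp [h] at h0
  rw [inv_eq_one_div, div_le_div_iff₀ (by positivity) (by positivity)]
  calc 1 * ‖z‖ ^ 4 ≤ z.re / 2 * z.re * (8 * z.re ^ 2) := by nlinarith
    _ ≤ Real.log ‖z + 1‖ * z.re * (8 * z.re ^ 2) := by gcongr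

lemma lintegral_ofReal_abs_log_norm_add_one_mul_re_div_eq_top :
    ∫⁻ z : ℂ, ENNReal.ofReal |Real.log ‖z + 1‖ * z.re / ‖z‖ ^ 4| = ⊤ := by
  set F : ℂ → ENNReal := fun z ↦ ENNReal.ofReal |Real.log ‖z + 1‖ * z.re / ‖z‖ ^ 4|
  have hF : Measurable F := by fun_prop
  have hslice : ∀ x ∈ Ioo (0 : ℝ) 1, ENNReal.ofReal (4⁻¹ * x⁻¹) ≤ ∫⁻ y : ℝ, F ⟨x, y⟩ := by
    intro x hx
    calc ENNReal.ofReal (4⁻¹ * x⁻¹) = ∫⁻ _ in Ioo (-x) x, ENNReal.ofReal (8 * x ^ 2)⁻¹ := by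
          rw [setLIntegral_const, Real.volume_Ioo, ← ENNReal.ofReal_mul (by positivity)]
          congr 1
          field_simp
          ring
      _ ≤ ∫⁻ y in Ioo (-x) x, F ⟨x, y⟩ := by
          refine setLIntegral_mono' measurableSet_Ioo fun y hy ↦ ENNReal.ofReal_le_ofReal ?_
          exact (Complex.inv_eight_mul_re_sq_le_log_norm_add_one_mul_re_div (z := ⟨x, y⟩) hx.1
            (by linarith [hx.2]) (abs_le.2 ⟨hy.1.le, hy.2.le⟩)).trans (le_abs_self _)
      _ ≤ ∫⁻ y, F ⟨x, y⟩ := setLIntegral_le_lintegral _ _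
  refine eq_top_iff.2 ?_
  calc ⊤ = ∫⁻ x in Ioo (0 : ℝ) 1, ENNReal.ofReal (4⁻¹ * x⁻¹) := by
        simp_rw [ENNReal.ofReal_mul (by norm_num : (0 : ℝ) ≤ 4⁻¹)]
        rw [lintegral_const_mul' _ _ ENNReal.ofReal_ne_top,
          Real.lintegral_Ioo_zero_ofReal_inv_eq_top one_pos, ENNReal.mul_top (by norm_num)]
    _ ≤ ∫⁻ x in Ioo (0 : ℝ) 1, ∫⁻ y, F ⟨x, y⟩ := setLIntegral_mono' measurableSet_Ioo hslice
    _ ≤ ∫⁻ x, ∫⁻ y, F ⟨x, y⟩ := setLIntegral_le_lintegral _ _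
    _ = ∫⁻ z, F z := (Complex.lintegral_eq_lintegral_lintegral hF).symm

/-- The function `z ↦ log|z + 1| · Re z / |z|⁴` is not Lebesgue integrable on `ℂ`:
the integral of its absolute value over `ℂ` is infinite. -/
theorem not_integrable_log_abs_add_one_mul_re :
    ¬ Integrable (fun z : ℂ =>
        Real.log (‖z + 1‖) * z.re / ‖z‖ ^ 4) volume ∧
    ∫⁻ z : ℂ, ENNReal.ofReal
        |Real.log (‖z + 1‖) * z.re / ‖z‖ ^ 4| = ⊤ :=
  ⟨fun h ↦ h.abs.lintegral_lt_top.ne lintegral_ofReal_abs_log_norm_add_one_mul_re_div_eq_top,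
    lintegral_ofReal_abs_log_norm_add_one_mul_re_div_eq_top⟩
end
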